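/- Let ζ > 0 and μ ∈ ℂ with |Im μ| < ζ, and define u_μ(α) := −Σ_{k∈ℤ} e^{−|k|ζ} · cos(2kμ) · e^{2ikα}/cosh(kζ), a series converging absolutely for real α. Then for every α ∈ ℝ: u_μ(α) + ∫_{−π/2}^{π/2} K(α−β)·u_μ(β) dβ = −(1/2)·[φ'(α−μ, ζ) + φ'(α+μ, ζ)]. -/

import Mathlib

/-- `φ'(ν, γ) = sinh(2γ)/(sin(ν+iγ) sin(ν−iγ))`. -/
noncomputable def phiP (ν : ℂ) (γ : ℝ) : ℂ :=
  Complex.sinh (2 * (γ : ℂ)) /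
    (Complex.sin (ν + Complex.I * (γ : ℂ)) * Complex.sin (ν - Complex.I * (γ : ℂ)))

/-- The Fourier-series solution `u_μ(α) = −Σ_{k∈ℤ} e^{−|k|ζ} cos(2kμ) e^{2ikα}/cosh(kζ)`
of the dressing integral equation for a close excitation of rapidity `μ`. -/
noncomputable def uFun (ζ : ℝ) (μ : ℂ) (α : ℝ) : ℂ :=
  -∑' k : ℤ, (Real.exp (-(|(k : ℝ)|) * ζ) : ℂ) * Complex.cos (2 * k * μ) *
      Complex.exp (2 * Complex.I * k * (α : ℂ)) / Complex.cosh (k * (ζ : ℂ))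


/-!
With `e_k(x) = exp (2ikx)`, the kernel is a Poisson kernel,
`φ'(λ, ζ) = Σ_k 2 e^{-2|k|ζ} e_k(λ)` (two geometric series), so by orthogonality of the `e_k`
on `[-π/2, π/2]` the integral operator is diagonal: `∫ K(α - β) e_k(β) dβ = e^{-2|k|ζ} e_k(α)`.
If `c_k` are the Fourier coefficients of `u_μ`, the left-hand side therefore has coefficients
`c_k (1 + e^{-2|k|ζ})`, and `e^{-|k|ζ} (1 + e^{-2|k|ζ}) = 2 e^{-2|k|ζ} cosh (kζ)` turns these
into `-2 e^{-2|k|ζ} cos (2kμ)`, the coefficients of the right-hand side. The bound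
`|c_k| ≤ 2 e^{-2|k|(ζ - |Im μ|)}` makes all series absolutely convergent and justifies
exchanging sum and integral.
-/

open Complex
open scoped Real

lemma cosh_sub_cos_ne_zero {a : ℝ} {x : ℂ} (hx : |x.im| < a) : cosh a - cos x ≠ 0 := by
  rw [sub_ne_zero, ← cos_mul_I, Ne, cos_eq_cos_iff, not_exists]
  rintro k (hk | hk)
  · have : x.im = a := by simpa using congrArg im hk
    linarith [le_abs_self x.im]
  · have : x.im = -a := by simpa using congrArg im hk
    linarith [neg_abs_le x.im]

lemma hasSum_poissonKernel {a : ℝ} {x : ℂ} (hx : |x.im| < a) :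
    HasSum (fun k : ℤ => (Real.exp (-(|(k : ℝ)| * a)) : ℂ) * cexp (I * k * x))
      (sinh a / (cosh a - cos x)) := by
  set w := cexp (I * x - a)
  set v := cexp (-(I * x) - a)
  have hw : ‖w‖ < 1 := by simpa [w, norm_exp] using neg_lt.1 (neg_lt_of_abs_lt hx)
  have hv : ‖v‖ < 1 := by simpa [v, norm_exp] using lt_of_abs_lt hx
  have hpos : HasSum (fun n : ℕ => w ^ n) (1 - w)⁻¹ := hasSum_geometric_of_norm_lt_one hw
  have hneg : HasSum (fun n : ℕ => v ^ (n + 1)) (v * (1 - v)⁻¹) := by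
    simpa only [pow_succ'] using (hasSum_geometric_of_norm_lt_one hv).mul_left v
  have hsum := HasSum.of_nat_of_neg_add_one (f := fun k : ℤ =>
      (Real.exp (-(|(k : ℝ)| * a)) : ℂ) * cexp (I * k * x))
    (hpos.congr_fun fun n => by
      simp only [w, ← exp_nat_mul, ofReal_exp, ← exp_add, Int.cast_natCast, Nat.abs_cast]
      push_cast; ring_nf)
    (hneg.congr_fun fun n => by
      simp only [v, ← exp_nat_mul, ofReal_exp, ← exp_add]
      rw [abs_of_nonpos (by push_cast; linarith [(n.cast_nonneg : (0:ℝ) ≤ n)])]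
      push_cast; ring_nf)
  convert hsum using 1
  have h1w : 1 - w ≠ 0 := sub_ne_zero.2 fun h => by simp [← h] at hw
  have h1v : 1 - v ≠ 0 := sub_ne_zero.2 fun h => by simp [← h] at hv
  have hA : cexp a ≠ 0 := exp_ne_zero _
  have hE : cexp (I * x) ≠ 0 := exp_ne_zero _
  rw [div_eq_iff (cosh_sub_cos_ne_zero hx), sinh, cosh, cos]
  simp only [w, v, exp_sub, exp_neg] at h1w h1v ⊢
  rw [show x * I = I * x by ring, show -x * I = -(I * x) by ring, exp_neg]
  generalize cexp a = A at *
  generalize cexp (I * x) = E at *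
  have hAE : A - E ≠ 0 := fun h => h1w (by rw [← sub_eq_zero.1 h, div_self hA, sub_self])
  have hAE' : A * E - 1 ≠ 0 := fun h => h1v (by field_simp; linear_combination h)
  field_simp
  ring

lemma summable_exp_neg_abs_mul {a : ℝ} (ha : 0 < a) :
    Summable fun k : ℤ => Real.exp (-(|(k : ℝ)| * a)) := by
  refine Complex.summable_ofReal.1 ?_
  simpa using (hasSum_poissonKernel (x := 0) (by simpa using ha)).summable

lemma sin_add_mul_I_mul_sin_sub_mul_I (ν c : ℂ) :
    sin (ν + I * c) * sin (ν - I * c) = (cosh (2 * c) - cos (2 * ν)) / 2 := by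
  rw [← cos_mul_I, show 2 * ν = (ν + I * c) + (ν - I * c) by ring,
    show 2 * c * I = (ν + I * c) - (ν - I * c) by ring, cos_add, cos_sub]
  ring

lemma phiP_eq (ν : ℂ) (γ : ℝ) :
    phiP ν γ = 2 * (sinh (2 * γ : ℝ) / (cosh (2 * γ : ℝ) - cos (2 * ν))) := by
  rw [phiP, sin_add_mul_I_mul_sin_sub_mul_I]
  push_cast
  field_simp

lemma hasSum_phiP {ζ : ℝ} {ν : ℂ} (hν : |ν.im| < ζ) :
    HasSum (fun k : ℤ => 2 * (Real.exp (-(|(k : ℝ)| * (2 * ζ))) : ℂ) * cexp (2 * I * k * ν))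
      (phiP ν ζ) := by
  have h2ν : |(2 * ν).im| < 2 * ζ := by
    rw [show (2 * ν).im = 2 * ν.im by simp, abs_mul, abs_two]; linarith
  rw [phiP_eq]
  exact ((hasSum_poissonKernel h2ν).mul_left 2).congr_fun fun k => by ring_nf

lemma continuous_phiP_ofReal_sub {ζ : ℝ} (hζ : 0 < ζ) (α : ℝ) :
    Continuous fun β : ℝ => phiP (α - β) ζ := by
  refine continuous_const.div (by fun_prop) fun β => ?_
  rw [sin_add_mul_I_mul_sin_sub_mul_I]
  refine div_ne_zero ?_ two_ne_zero
  simpa using cosh_sub_cos_ne_zero (a := 2 * ζ) (x := 2 * (α - β)) (by simpa)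

lemma integral_exp_two_mul_I_int_mul (n : ℤ) :
    ∫ β in -(π / 2)..π / 2, cexp (2 * I * n * β) = if n = 0 then (π : ℂ) else 0 := by
  split_ifs with hn
  · simp [hn]
  have hc : 2 * I * n ≠ 0 := by simp [hn]
  rw [integral_exp_mul_complex hc, div_eq_zero_iff, sub_eq_zero]
  left
  rw [← mul_one (cexp (2 * I * n * ↑(-(π / 2)))), ← exp_int_mul_two_pi_mul_I n, ← exp_add]
  congr 1
  push_cast
  ring

lemma hasSum_intervalIntegral_mul_tsum {ι : Type*} [Countable ι] {a b : ℝ} {g : ℝ → ℂ}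
    (hg : Continuous g) {f : ι → ℝ → ℂ} (hf : ∀ i, Continuous (f i)) {B : ι → ℝ}
    (hB : ∀ i x, ‖f i x‖ ≤ B i) (hBs : Summable B) :
    HasSum (fun i => ∫ x in a..b, g x * f i x) (∫ x in a..b, g x * ∑' i, f i x) := by
  refine intervalIntegral.hasSum_integral_of_dominated_convergence (fun i x => ‖g x‖ * B i)
    (fun i => (hg.mul (hf i)).aestronglyMeasurable)
    (fun i => .of_forall fun x _ => by
      rw [norm_mul]; exact mul_le_mul_of_nonneg_left (hB i x) (norm_nonneg _))
    (.of_forall fun x _ => hBs.mul_left _) ?_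
    (.of_forall fun x _ => ((hBs.of_norm_bounded (hB · x)).hasSum).mul_left (g x))
  simp_rw [tsum_mul_left]
  exact (hg.norm.mul continuous_const).intervalIntegrable _ _

lemma integral_exp_mul_phiP {ζ : ℝ} (hζ : 0 < ζ) (α : ℝ) (k : ℤ) :
    ∫ β in -(π / 2)..π / 2, cexp (2 * I * k * β) * phiP (α - β) ζ
      = 2 * π * (Real.exp (-(|(k : ℝ)| * (2 * ζ))) : ℂ) * cexp (2 * I * k * α) := by
  have hφ (β : ℝ) : phiP (α - β) ζ = ∑' j : ℤ,
      2 * (Real.exp (-(|(j : ℝ)| * (2 * ζ))) : ℂ) * cexp (2 * I * j * (α - β)) :=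
    (hasSum_phiP (by simpa using hζ)).tsum_eq.symm
  have H := hasSum_intervalIntegral_mul_tsum (a := -(π / 2)) (b := π / 2)
    (g := fun β => cexp (2 * I * k * β)) (by fun_prop)
    (f := fun (j : ℤ) β =>
      2 * (Real.exp (-(|(j : ℝ)| * (2 * ζ))) : ℂ) * cexp (2 * I * j * (α - β)))
    (fun j => by fun_prop)
    (B := fun j : ℤ => 2 * Real.exp (-(|(j : ℝ)| * (2 * ζ))))
    (fun j β => by simp [norm_exp]) ((summable_exp_neg_abs_mul (by linarith)).mul_left 2)
  simp only [← hφ] at H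
  refine H.unique ((hasSum_ite_eq k _).congr_fun fun j => ?_)
  have hint : ∀ β : ℝ, cexp (2 * I * k * β) *
      (2 * (Real.exp (-(|(j : ℝ)| * (2 * ζ))) : ℂ) * cexp (2 * I * j * (α - β)))
      = 2 * (Real.exp (-(|(j : ℝ)| * (2 * ζ))) : ℂ) * cexp (2 * I * j * α) *
        cexp (2 * I * (k - j : ℤ) * β) := fun β => by
    have e : cexp (2 * I * j * α) * cexp (2 * I * (k - j : ℤ) * β)
        = cexp (2 * I * k * β) * cexp (2 * I * j * (α - β)) := by
      rw [← exp_add, ← exp_add]; push_cast; ring_nf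
    linear_combination (-2 * (Real.exp (-(|(j : ℝ)| * (2 * ζ))) : ℂ)) * e
  simp only [hint, intervalIntegral.integral_const_mul, integral_exp_two_mul_I_int_mul,
    sub_eq_zero, eq_comm (a := k)]
  split_ifs with h
  · subst h; ring
  · simp

noncomputable def dressingCoeff (ζ : ℝ) (μ : ℂ) (k : ℤ) : ℂ :=
  -((Real.exp (-(|(k : ℝ)|) * ζ) : ℂ) * cos (2 * k * μ) / cosh (k * ζ))

lemma uFun_eq_tsum (ζ : ℝ) (μ : ℂ) (α : ℝ) :
    uFun ζ μ α = ∑' k : ℤ, dressingCoeff ζ μ k * cexp (2 * I * k * α) := by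
  rw [uFun, ← tsum_neg]
  congr 1 with k
  rw [dressingCoeff]
  ring

lemma norm_cos_le_exp_abs_im (z : ℂ) : ‖cos z‖ ≤ Real.exp |z.im| := by
  have h (w : ℂ) (hw : w.re ≤ |z.im|) : ‖cexp w‖ ≤ Real.exp |z.im| := by
    rw [norm_exp]; exact Real.exp_le_exp.2 hw
  rw [cos, norm_div, RCLike.norm_ofNat, div_le_iff₀ two_pos, mul_two]
  refine (norm_add_le _ _).trans (add_le_add (h _ ?_) (h _ ?_)) <;> simp [neg_le_abs, le_abs_self]

lemma norm_dressingCoeff_le {ζ : ℝ} (hζ : 0 ≤ ζ) (μ : ℂ) (k : ℤ) :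
    ‖dressingCoeff ζ μ k‖ ≤ 2 * Real.exp (-(|(k : ℝ)| * (2 * (ζ - |μ.im|)))) := by
  have hcos : ‖cos (2 * k * μ)‖ ≤ Real.exp (2 * |(k : ℝ)| * |μ.im|) :=
    (norm_cos_le_exp_abs_im _).trans_eq (by simp [abs_mul])
  have hcosh : Real.exp (|(k : ℝ)| * ζ) ≤ 2 * Real.cosh (k * ζ) := by
    rw [Real.cosh_eq, mul_div_cancel₀ _ two_ne_zero]
    simpa [abs_mul, abs_of_nonneg hζ] using Real.exp_abs_le ((k : ℝ) * ζ)
  rw [dressingCoeff, norm_neg, norm_div, norm_mul, ← ofReal_intCast, ← ofReal_mul,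
    ← ofReal_cosh, norm_real, norm_real, Real.norm_of_nonneg (Real.exp_pos _).le,
    Real.norm_of_nonneg (Real.cosh_pos _).le, div_le_iff₀ (Real.cosh_pos _)]
  calc Real.exp (-|(k : ℝ)| * ζ) * ‖cos (2 * k * μ)‖
      ≤ Real.exp (-|(k : ℝ)| * ζ) * Real.exp (2 * |(k : ℝ)| * |μ.im|) := by gcongr
    _ = Real.exp (-(|(k : ℝ)| * (2 * (ζ - |μ.im|)))) * Real.exp (|(k : ℝ)| * ζ) := by
      rw [← Real.exp_add, ← Real.exp_add]; ring_nf
    _ ≤ _ := by nlinarith [Real.exp_pos (-(|(k : ℝ)| * (2 * (ζ - |μ.im|))))]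

section
variable {ζ : ℝ} {μ : ℂ}

lemma norm_dressingCoeff_mul_exp_le (hζ : 0 ≤ ζ) (k : ℤ) (x : ℝ) :
    ‖dressingCoeff ζ μ k * cexp (2 * I * k * x)‖
      ≤ 2 * Real.exp (-(|(k : ℝ)| * (2 * (ζ - |μ.im|)))) := by
  simpa [norm_exp] using norm_dressingCoeff_le hζ μ k

lemma summable_dressingCoeff_bound (hμ : |μ.im| < ζ) :
    Summable fun k : ℤ => 2 * Real.exp (-(|(k : ℝ)| * (2 * (ζ - |μ.im|)))) :=
  (summable_exp_neg_abs_mul (by linarith)).mul_left 2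

lemma hasSum_uFun (hμ : |μ.im| < ζ) (α : ℝ) :
    HasSum (fun k : ℤ => dressingCoeff ζ μ k * cexp (2 * I * k * α)) (uFun ζ μ α) := by
  rw [uFun_eq_tsum]
  exact ((summable_dressingCoeff_bound hμ).of_norm_bounded
    fun k => norm_dressingCoeff_mul_exp_le ((abs_nonneg _).trans hμ.le) k α).hasSum

lemma hasSum_integral_kernel_mul_uFun (hμ : |μ.im| < ζ) (α : ℝ) :
    HasSum (fun k : ℤ => dressingCoeff ζ μ k * Real.exp (-(|(k : ℝ)| * (2 * ζ))) *
        cexp (2 * I * k * α))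
      (∫ β in -(π / 2)..π / 2, phiP (α - β) ζ / (2 * π) * uFun ζ μ β) := by
  have hζ : 0 < ζ := (abs_nonneg _).trans_lt hμ
  have H := hasSum_intervalIntegral_mul_tsum (a := -(π / 2)) (b := π / 2)
    ((continuous_phiP_ofReal_sub hζ α).div_const (2 * π))
    (f := fun (k : ℤ) (β : ℝ) => dressingCoeff ζ μ k * cexp (2 * I * k * β))
    (fun k => by fun_prop)
    (norm_dressingCoeff_mul_exp_le hζ.le) (summable_dressingCoeff_bound hμ)
  simp only [← uFun_eq_tsum] at H
  refine H.congr_fun fun k => ?_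
  have hintegrand : (fun β : ℝ => phiP (α - β) ζ / (2 * π) * (dressingCoeff ζ μ k *
      cexp (2 * I * k * β))) = fun β : ℝ => dressingCoeff ζ μ k / (2 * π) *
        (cexp (2 * I * k * β) * phiP (α - β) ζ) := by
    ext β; ring
  rw [hintegrand, intervalIntegral.integral_const_mul, integral_exp_mul_phiP hζ]
  field_simp

lemma hasSum_neg_half_phiP_sub_add_phiP_add (hμ : |μ.im| < ζ) (α : ℝ) :
    HasSum (fun k : ℤ => -(2 * Real.exp (-(|(k : ℝ)| * (2 * ζ))) * cos (2 * k * μ)) *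
        cexp (2 * I * k * α))
      (-(1 / 2) * (phiP (α - μ) ζ + phiP (α + μ) ζ)) := by
  refine (((hasSum_phiP (ν := α - μ) (by simpa)).add
    (hasSum_phiP (ν := α + μ) (by simpa))).mul_left _).congr_fun fun k => ?_
  have hexp : cexp (2 * I * k * (α - μ)) + cexp (2 * I * k * (α + μ))
      = 2 * cos (2 * k * μ) * cexp (2 * I * k * α) := by
    rw [cos, show 2 * k * μ * I = 2 * I * k * μ by ring,
      show -(2 * k * μ) * I = -(2 * I * k * μ) by ring, mul_sub, mul_add, exp_add,
      sub_eq_add_neg, exp_add]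
    ring
  linear_combination (Real.exp (-(|(k : ℝ)| * (2 * ζ))) : ℂ) * hexp

end

lemma dressingCoeff_mul_one_add_exp (ζ : ℝ) (μ : ℂ) (k : ℤ) :
    dressingCoeff ζ μ k * (1 + Real.exp (-(|(k : ℝ)| * (2 * ζ))))
      = -(2 * Real.exp (-(|(k : ℝ)| * (2 * ζ))) * cos (2 * k * μ)) := by
  have hcosh : Real.cosh (k * ζ) = Real.cosh (|(k : ℝ)| * ζ) := by
    rcases abs_choice (k : ℝ) with h | h
    · rw [h]
    · rw [h, neg_mul, Real.cosh_neg]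
  have hexp : Real.exp (-|(k : ℝ)| * ζ) * (1 + Real.exp (-(|(k : ℝ)| * (2 * ζ))))
      = 2 * Real.exp (-(|(k : ℝ)| * (2 * ζ))) * Real.cosh (k * ζ) := by
    set t := |(k : ℝ)| * ζ
    have h : Real.exp (-(2 * t)) * Real.exp t = Real.exp (-t) := by
      rw [← Real.exp_add]; ring_nf
    rw [neg_mul, show |(k : ℝ)| * (2 * ζ) = 2 * t by ring, hcosh, Real.cosh_eq]
    linear_combination -h
  have hexpC : (Real.exp (-|(k : ℝ)| * ζ) : ℂ) * (1 + Real.exp (-(|(k : ℝ)| * (2 * ζ))))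
      = 2 * Real.exp (-(|(k : ℝ)| * (2 * ζ))) * cosh (k * ζ) := by
    exact_mod_cast congrArg ofReal hexp
  have hcosh_ne : cosh (k * ζ) ≠ 0 := by
    exact_mod_cast (Real.cosh_pos (k * ζ)).ne'
  rw [dressingCoeff, neg_mul, div_mul_eq_mul_div, mul_right_comm, hexpC]
  field_simp

theorem close_root_dressing_equation_general
    (ζ : ℝ) (μ : ℂ) (hμ : |μ.im| < ζ) (α : ℝ) :
    uFun ζ μ α +
        ∫ β in (-(Real.pi / 2))..(Real.pi / 2),
          phiP ((α : ℂ) - (β : ℂ)) ζ / (2 * (Real.pi : ℂ)) * uFun ζ μ β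
      = -(1 / 2) * (phiP ((α : ℂ) - μ) ζ + phiP ((α : ℂ) + μ) ζ) := by
  refine ((hasSum_uFun hμ α).add (hasSum_integral_kernel_mul_uFun hμ α)).unique
    ((hasSum_neg_half_phiP_sub_add_phiP_add hμ α).congr_fun fun k => ?_)
  rw [← dressingCoeff_mul_one_add_exp]
  ring

/-- For `ζ > 0` and `|Im μ| < ζ`, `u_μ` solves the dressing integral equation
`u_μ(α) + ∫_{−π/2}^{π/2} K(α−β) u_μ(β) dβ = −(1/2)[φ'(α−μ,ζ) + φ'(α+μ,ζ)]` for real `α`,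
where `K(λ) = φ'(λ,ζ)/(2π)`. -/
theorem close_root_dressing_equation
    (ζ : ℝ) (hζ : 0 < ζ) (μ : ℂ) (hμ : |μ.im| < ζ) (α : ℝ) :
    uFun ζ μ α +
        ∫ β in (-(Real.pi / 2))..(Real.pi / 2),
          phiP ((α : ℂ) - (β : ℂ)) ζ / (2 * (Real.pi : ℂ)) * uFun ζ μ β
      = -(1 / 2) * (phiP ((α : ℂ) - μ) ζ + phiP ((α : ℂ) + μ) ζ) :=
  close_root_dressing_equation_general ζ μ hμ α
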